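/- Let s ≥ 1, let y_1,…,y_s ∈ ℝ, let γ > 0 and λ ≥ 0. Then min_{α ≥ 0} Cost(y_{1:s}, α; γ) = min_{α ≥ 0} Cost(y_{s:1}, α; 1/γ), where y_{s:1} = (y_s, y_{s−1}, …, y_1) denotes the time-reversed data and the right-hand Cost is computed with decay parameter 1/γ. Equivalently, the unconstrained changepoint objective is invariant under simultaneously reversing the data in time and replacing γ by 1/γ. -/
import Mathlib


/-- Segment cost `D(a, b, α) = (1/2) ∑_{t=a+1}^{b} (y_t − α γ^{t−b})²`. -/
noncomputable def segCost (y : ℕ → ℝ) (γ : ℝ) (a b : ℕ) (α : ℝ) : ℝ :=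
  (1/2) * ∑ t ∈ Finset.Icc (a+1) b, (y t - α * γ ^ ((t : ℤ) - (b : ℤ)))^2

/-- `τ` is a segmentation of the interval `{a+1,…,b}` with `k` changepoints:
`a = τ 0 < τ 1 < … < τ k < τ (k+1) = b`. -/
def IsSeg (a b k : ℕ) (τ : ℕ → ℕ) : Prop :=
  τ 0 = a ∧ τ (k+1) = b ∧ ∀ j ≤ k, τ j < τ (j+1)

/-- Changepoint objective with per-segment amplitudes:
`∑_{j=0}^{k} D(τ_j, τ_{j+1}, α_j) + λ k`. -/
noncomputable def objAmp (y : ℕ → ℝ) (γ lam : ℝ) (k : ℕ) (τ : ℕ → ℕ) (α : ℕ → ℝ) : ℝ :=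
  (∑ j ∈ Finset.range (k+1), segCost y γ (τ j) (τ (j+1)) (α j)) + lam * k

/-- `F(τ)`: the optimal cost of segmenting the first `τ` data points
(minimum of the changepoint objective over segmentations and nonnegative
amplitudes), with the convention `F(0) = −λ`. -/
noncomputable def Fval (y : ℕ → ℝ) (γ lam : ℝ) : ℕ → ℝ
  | 0 => -lam
  | s+1 => sInf { c | ∃ (k : ℕ) (τ : ℕ → ℕ) (a : ℕ → ℝ), IsSeg 0 (s+1) k τ ∧
      (∀ j ≤ k, 0 ≤ a j) ∧ c = objAmp y γ lam k τ a }

/-- `Cost(y_{1:s}, α; γ) = min_{0 ≤ τ < s} { F(τ) + D(τ, s, α) + λ }`. -/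
noncomputable def Cost (y : ℕ → ℝ) (γ lam : ℝ) (s : ℕ) (α : ℝ) : ℝ :=
  sInf { c | ∃ τ : ℕ, τ < s ∧ c = Fval y γ lam τ + segCost y γ τ s α + lam }

/-- Optimal segment cost `min_{α ≥ 0} D(a, b, α)`. -/
noncomputable def segMin (y : ℕ → ℝ) (γ : ℝ) (a b : ℕ) : ℝ :=
  sInf { c | ∃ α : ℝ, 0 ≤ α ∧ c = segCost y γ a b α }

/-- Changepoint objective with each segment's amplitude optimized separately:
`∑_{j=0}^{k} min_{α ≥ 0} D(τ_j, τ_{j+1}, α) + λ k`. -/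
noncomputable def objOpt (y : ℕ → ℝ) (γ lam : ℝ) (k : ℕ) (τ : ℕ → ℕ) : ℝ :=
  (∑ j ∈ Finset.range (k+1), segMin y γ (τ j) (τ (j+1))) + lam * k

section Aux

lemma bddBelow_of_nonneg {S : Set ℝ} (h : ∀ x ∈ S, 0 ≤ x) : BddBelow S :=
  ⟨0, fun x hx => h x hx⟩

lemma segCost_nonneg (y : ℕ → ℝ) (γ : ℝ) (a b : ℕ) (α : ℝ) : 0 ≤ segCost y γ a b α := by
  unfold segCost
  positivity

lemma objAmp_nonneg (y : ℕ → ℝ) (γ : ℝ) {lam : ℝ} (hlam : 0 ≤ lam)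
    (k : ℕ) (τ : ℕ → ℕ) (a : ℕ → ℝ) : 0 ≤ objAmp y γ lam k τ a := by
  unfold objAmp
  have h1 : 0 ≤ ∑ j ∈ Finset.range (k+1), segCost y γ (τ j) (τ (j+1)) (a j) :=
    Finset.sum_nonneg fun j _ => segCost_nonneg y γ _ _ _
  have h2 : (0:ℝ) ≤ lam * k := mul_nonneg hlam (Nat.cast_nonneg k)
  linarith

/-- The set whose infimum defines `Fval` at a positive argument. -/
def Fset (y : ℕ → ℝ) (γ lam : ℝ) (s : ℕ) : Set ℝ :=
  { c | ∃ (k : ℕ) (τ : ℕ → ℕ) (a : ℕ → ℝ), IsSeg 0 s k τ ∧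
      (∀ j ≤ k, 0 ≤ a j) ∧ c = objAmp y γ lam k τ a }

lemma Fval_succ (y : ℕ → ℝ) (γ lam : ℝ) (m : ℕ) :
    Fval y γ lam (m+1) = sInf (Fset y γ lam (m+1)) := rfl

lemma Fval_zero (y : ℕ → ℝ) (γ lam : ℝ) : Fval y γ lam 0 = -lam := rfl

lemma Fset_nonneg (y : ℕ → ℝ) (γ : ℝ) {lam : ℝ} (hlam : 0 ≤ lam) (s : ℕ) :
    ∀ c ∈ Fset y γ lam s, 0 ≤ c := by
  rintro c ⟨k, τ, a, _, _, rfl⟩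
  exact objAmp_nonneg y γ hlam k τ a

lemma Fset_nonempty (y : ℕ → ℝ) (γ lam : ℝ) (m : ℕ) : (Fset y γ lam (m+1)).Nonempty := by
  refine ⟨_, 0, (fun j => if j = 0 then 0 else m+1), (fun _ => 0), ⟨?_, ?_, ?_⟩,
    fun j _ => le_rfl, rfl⟩
  · simp
  · simp
  · intro j hj
    have hj0 : j = 0 := Nat.le_zero.mp hj
    subst hj0
    simp

lemma Fval_ge (y : ℕ → ℝ) (γ : ℝ) {lam : ℝ} (hlam : 0 ≤ lam) (t : ℕ) :
    -lam ≤ Fval y γ lam t := by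
  cases t with
  | zero => exact le_of_eq rfl
  | succ m =>
    rw [Fval_succ]
    have h := Real.sInf_nonneg (Fset_nonneg y γ hlam (m+1))
    linarith

/-- The set whose infimum defines `Cost`. -/
def Cset (y : ℕ → ℝ) (γ lam : ℝ) (s : ℕ) (α : ℝ) : Set ℝ :=
  { c | ∃ τ : ℕ, τ < s ∧ c = Fval y γ lam τ + segCost y γ τ s α + lam }

lemma Cost_eq (y : ℕ → ℝ) (γ lam : ℝ) (s : ℕ) (α : ℝ) :
    Cost y γ lam s α = sInf (Cset y γ lam s α) := rfl

lemma Cset_nonneg (y : ℕ → ℝ) (γ : ℝ) {lam : ℝ} (hlam : 0 ≤ lam) (s : ℕ) (α : ℝ) :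
    ∀ c ∈ Cset y γ lam s α, 0 ≤ c := by
  rintro c ⟨t, ht, rfl⟩
  have h1 := Fval_ge y γ hlam t
  have h2 := segCost_nonneg y γ t s α
  linarith

lemma Cost_nonneg (y : ℕ → ℝ) (γ : ℝ) {lam : ℝ} (hlam : 0 ≤ lam) (s : ℕ) (α : ℝ) :
    0 ≤ Cost y γ lam s α := by
  rw [Cost_eq]
  exact Real.sInf_nonneg (Cset_nonneg y γ hlam s α)

lemma Cset_nonempty (y : ℕ → ℝ) (γ lam : ℝ) (m : ℕ) (α : ℝ) :
    (Cset y γ lam (m+1) α).Nonempty :=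
  ⟨_, 0, Nat.succ_pos m, rfl⟩

lemma isSeg_mono {a b k : ℕ} {τ : ℕ → ℕ} (h : IsSeg a b k τ) :
    ∀ i j, i ≤ j → j ≤ k+1 → τ i ≤ τ j := by
  intro i j hij hjk
  induction hij with
  | refl => exact le_rfl
  | @step j hj ih =>
    exact le_trans (ih (by omega)) (le_of_lt (h.2.2 j (by omega)))

lemma isSeg_le {b k : ℕ} {τ : ℕ → ℕ} (h : IsSeg 0 b k τ) :
    ∀ j ≤ k+1, τ j ≤ b := by
  intro j hj
  exact le_trans (isSeg_mono h j (k+1) hj le_rfl) (le_of_eq h.2.1)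

/-- Part 1: minimizing `Cost` over nonnegative amplitudes gives exactly `F(s)`. -/
lemma step1 (y : ℕ → ℝ) (γ : ℝ) {lam : ℝ} (hlam : 0 ≤ lam) (m : ℕ) :
    sInf { c | ∃ α : ℝ, 0 ≤ α ∧ c = Cost y γ lam (m+1) α } = Fval y γ lam (m+1) := by
  set A := { c | ∃ α : ℝ, 0 ≤ α ∧ c = Cost y γ lam (m+1) α } with hA
  have hAne : A.Nonempty := ⟨Cost y γ lam (m+1) 0, 0, le_rfl, rfl⟩
  have hAnn : ∀ c ∈ A, 0 ≤ c := by
    rintro c ⟨α, hα, rfl⟩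
    exact Cost_nonneg y γ hlam (m+1) α
  have hAbdd : BddBelow A := bddBelow_of_nonneg hAnn
  have hBbdd : BddBelow (Fset y γ lam (m+1)) :=
    bddBelow_of_nonneg (Fset_nonneg y γ hlam (m+1))
  rw [Fval_succ]
  apply le_antisymm
  · -- sInf A ≤ sInf (Fset ...)
    apply le_csInf (Fset_nonempty y γ lam m)
    rintro c ⟨k, τ, a, hseg, ha, rfl⟩
    have htk : τ k < m+1 := by
      have h2 := hseg.2.2 k le_rfl
      rw [hseg.2.1] at h2
      exact h2
    have h1 : sInf A ≤ Cost y γ lam (m+1) (a k) :=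
      csInf_le hAbdd ⟨a k, ha k le_rfl, rfl⟩
    have h2 : Cost y γ lam (m+1) (a k)
        ≤ Fval y γ lam (τ k) + segCost y γ (τ k) (m+1) (a k) + lam := by
      rw [Cost_eq]
      exact csInf_le (bddBelow_of_nonneg (Cset_nonneg y γ hlam (m+1) (a k)))
        ⟨τ k, htk, rfl⟩
    have h3 : Fval y γ lam (τ k) + segCost y γ (τ k) (m+1) (a k) + lam
        ≤ objAmp y γ lam k τ a := by
      cases k with
      | zero =>
        have e0 : τ 0 = 0 := hseg.1
        have e1 : τ (0+1) = m+1 := hseg.2.1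
        unfold objAmp
        rw [Finset.sum_range_one, e0, e1, Fval_zero]
        simp
      | succ k' =>
        have het1 : 1 ≤ τ (k'+1) := by
          have hm := isSeg_mono hseg 1 (k'+1) (by omega) (by omega)
          have h01 : τ 0 < τ 1 := hseg.2.2 0 (by omega)
          rw [hseg.1] at h01
          omega
        obtain ⟨t', het⟩ : ∃ t', τ (k'+1) = t' + 1 := ⟨τ (k'+1) - 1, by omega⟩
        have hseg' : IsSeg 0 (t'+1) k' τ :=
          ⟨hseg.1, het, fun j hj => hseg.2.2 j (by omega)⟩
        have hmem : objAmp y γ lam k' τ a ∈ Fset y γ lam (t'+1) :=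
          ⟨k', τ, a, hseg', fun j hj => ha j (by omega), rfl⟩
        have hF_le : Fval y γ lam (τ (k'+1)) ≤ objAmp y γ lam k' τ a := by
          rw [het, Fval_succ]
          exact csInf_le (bddBelow_of_nonneg (Fset_nonneg y γ hlam (t'+1))) hmem
        have hsplit : objAmp y γ lam (k'+1) τ a
            = objAmp y γ lam k' τ a
              + segCost y γ (τ (k'+1)) (τ (k'+1+1)) (a (k'+1)) + lam := by
          unfold objAmp
          rw [Finset.sum_range_succ]
          push_cast
          ring
        rw [hsplit, hseg.2.1]
        linarith
    linarith
  · -- sInf (Fset ...) ≤ sInf A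
    apply le_csInf hAne
    rintro c ⟨α, hα, rfl⟩
    rw [Cost_eq]
    apply le_csInf (Cset_nonempty y γ lam m α)
    rintro x ⟨t, ht, rfl⟩
    cases t with
    | zero =>
      have hmem : segCost y γ 0 (m+1) α ∈ Fset y γ lam (m+1) := by
        refine ⟨0, (fun j => if j = 0 then 0 else m+1), (fun _ => α),
          ⟨by simp, by simp, ?_⟩, fun _ _ => hα, ?_⟩
        · intro j hj
          have hj0 : j = 0 := Nat.le_zero.mp hj
          subst hj0
          simp
        · unfold objAmp
          rw [Finset.sum_range_one]
          simp
      have hle := csInf_le hBbdd hmem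
      rw [Fval_zero]
      linarith
    | succ t' =>
      rw [Fval_succ]
      have key : ∀ c' ∈ Fset y γ lam (t'+1),
          sInf (Fset y γ lam (m+1)) - segCost y γ (t'+1) (m+1) α - lam ≤ c' := by
        rintro c' ⟨k, τ, a, hseg, ha, rfl⟩
        set τ'' : ℕ → ℕ := fun j => if j ≤ k+1 then τ j else m+1 with hτ''
        set a'' : ℕ → ℝ := fun j => if j ≤ k then a j else α with ha''
        have eτ : ∀ j, j ≤ k+1 → τ'' j = τ j := by
          intro j hj
          simp only [hτ'']
          rw [if_pos hj]
        have eτ2 : τ'' (k+1+1) = m+1 := by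
          simp only [hτ'']
          rw [if_neg (by omega)]
        have ea : ∀ j, j ≤ k → a'' j = a j := by
          intro j hj
          simp only [ha'']
          rw [if_pos hj]
        have ea2 : a'' (k+1) = α := by
          simp only [ha'']
          rw [if_neg (by omega)]
        have hseg'' : IsSeg 0 (m+1) (k+1) τ'' := by
          refine ⟨?_, ?_, ?_⟩
          · rw [eτ 0 (by omega), hseg.1]
          · exact eτ2
          · intro j hj
            rcases Nat.lt_or_ge j (k+1) with h | h
            · rw [eτ j (by omega), eτ (j+1) (by omega)]
              exact hseg.2.2 j (by omega)
            · have hj1 : j = k+1 := by omega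
              subst hj1
              rw [eτ (k+1) le_rfl, eτ2, hseg.2.1]
              omega
        have hobj : objAmp y γ lam (k+1) τ'' a''
            = objAmp y γ lam k τ a + segCost y γ (t'+1) (m+1) α + lam := by
          unfold objAmp
          rw [Finset.sum_range_succ]
          have hsum : ∑ j ∈ Finset.range (k+1), segCost y γ (τ'' j) (τ'' (j+1)) (a'' j)
              = ∑ j ∈ Finset.range (k+1), segCost y γ (τ j) (τ (j+1)) (a j) := by
            apply Finset.sum_congr rfl
            intro j hj
            have hj' : j ≤ k := by
              have := Finset.mem_range.mp hj
              omega
            rw [eτ j (by omega), eτ (j+1) (by omega), ea j hj']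
          have hlast : segCost y γ (τ'' (k+1)) (τ'' (k+1+1)) (a'' (k+1))
              = segCost y γ (t'+1) (m+1) α := by
            rw [eτ (k+1) le_rfl, eτ2, ea2, hseg.2.1]
          rw [hsum, hlast]
          push_cast
          ring
        have hmem : objAmp y γ lam (k+1) τ'' a'' ∈ Fset y γ lam (m+1) := by
          refine ⟨k+1, τ'', a'', hseg'', ?_, rfl⟩
          intro j hj
          by_cases hjk : j ≤ k
          · rw [ea j hjk]; exact ha j hjk
          · have hj1 : j = k+1 := by omega
            subst hj1
            rw [ea2]; exact hα
        have hle := csInf_le hBbdd hmem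
        rw [hobj] at hle
        linarith
      have hge := le_csInf (Fset_nonempty y γ lam t') key
      linarith

end Aux
section Rev

lemma segCost_rev (y : ℕ → ℝ) {γ : ℝ} (hγ : 0 < γ) (s a b : ℕ) (hb : b ≤ s) (α : ℝ) :
    segCost (fun t => y (s+1-t)) (1/γ) a b α
      = segCost y γ (s-b) (s-a) (α * γ ^ ((b:ℤ) - (a:ℤ) - 1)) := by
  unfold segCost
  congr 1
  refine Finset.sum_nbij' (fun t => s+1-t) (fun u => s+1-u) ?_ ?_ ?_ ?_ ?_
  · intro t htm
    simp only [Finset.mem_Icc] at htm ⊢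
    omega
  · intro u hum
    simp only [Finset.mem_Icc] at hum ⊢
    omega
  · intro t htm
    simp only [Finset.mem_Icc] at htm
    show s + 1 - (s + 1 - t) = t
    omega
  · intro u hum
    simp only [Finset.mem_Icc] at hum
    show s + 1 - (s + 1 - u) = u
    omega
  · intro t htm
    simp only [Finset.mem_Icc] at htm
    have hcast1 : ((s+1-t : ℕ) : ℤ) = (s:ℤ) + 1 - t := by omega
    have hcast2 : ((s-b : ℕ) : ℤ) = (s:ℤ) - b := by omega
    have hcast3 : ((s-a : ℕ) : ℤ) = (s:ℤ) - a := by omega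
    have hexp : α * (1/γ) ^ ((t:ℤ) - (b:ℤ))
        = α * γ ^ ((b:ℤ) - (a:ℤ) - 1) * γ ^ (((s:ℤ) + 1 - t) - ((s:ℤ) - a)) := by
      rw [one_div, inv_zpow', mul_assoc, ← zpow_add₀ (ne_of_gt hγ)]
      congr 1
      ring
    rw [hcast1, hcast3, ← hexp]

lemma segCost_congr {y z : ℕ → ℝ} (γ : ℝ) (a b : ℕ) (α : ℝ)
    (h : ∀ t ∈ Finset.Icc (a+1) b, y t = z t) :
    segCost y γ a b α = segCost z γ a b α := by
  unfold segCost
  congr 1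
  apply Finset.sum_congr rfl
  intro t htm
  rw [h t htm]

lemma objAmp_congr {y z : ℕ → ℝ} (γ lam : ℝ) {s k : ℕ} {τ : ℕ → ℕ} (a : ℕ → ℝ)
    (hseg : IsSeg 0 s k τ) (h : ∀ t, 1 ≤ t → t ≤ s → y t = z t) :
    objAmp y γ lam k τ a = objAmp z γ lam k τ a := by
  unfold objAmp
  congr 1
  apply Finset.sum_congr rfl
  intro j hj
  have hj' : j + 1 ≤ k + 1 := by
    have := Finset.mem_range.mp hj
    omega
  have hub : τ (j+1) ≤ s := isSeg_le hseg (j+1) hj'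
  apply segCost_congr
  intro t htm
  simp only [Finset.mem_Icc] at htm
  exact h t (by omega) (by omega)

lemma objAmp_rev (y : ℕ → ℝ) {γ : ℝ} (hγ : 0 < γ) (lam : ℝ) (s k : ℕ)
    (τ : ℕ → ℕ) (a : ℕ → ℝ) (hseg : IsSeg 0 s k τ) (ha : ∀ j ≤ k, 0 ≤ a j) :
    ∃ (τ' : ℕ → ℕ) (a' : ℕ → ℝ), IsSeg 0 s k τ' ∧ (∀ j ≤ k, 0 ≤ a' j) ∧
      objAmp (fun t => y (s+1-t)) (1/γ) lam k τ' a' = objAmp y γ lam k τ a := by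
  have hle : ∀ j ≤ k+1, τ j ≤ s := isSeg_le hseg
  refine ⟨fun j => s - τ (k+1-j),
    fun j => a (k-j) * γ ^ ((τ (k-j) : ℤ) + 1 - (τ (k-j+1) : ℤ)), ?_, ?_, ?_⟩
  · refine ⟨?_, ?_, ?_⟩
    · simp only [Nat.sub_zero]
      rw [hseg.2.1]
      omega
    · simp only [Nat.sub_self]
      rw [hseg.1]
      omega
    · intro j hj
      show s - τ (k+1-j) < s - τ (k+1-(j+1))
      have e1 : k + 1 - (j+1) = k - j := by omega
      rw [e1]
      have h2 : τ (k-j) < τ (k-j+1) := hseg.2.2 (k-j) (by omega)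
      have h3 : k - j + 1 = k + 1 - j := by omega
      have h4 : τ (k+1-j) ≤ s := hle (k+1-j) (by omega)
      rw [h3] at h2
      omega
  · intro j hj
    have h1 : 0 ≤ a (k-j) := ha (k-j) (by omega)
    have h2 : (0:ℝ) < γ ^ ((τ (k-j) : ℤ) + 1 - (τ (k-j+1) : ℤ)) := zpow_pos hγ _
    exact mul_nonneg h1 (le_of_lt h2)
  · unfold objAmp
    congr 1
    rw [← Finset.sum_range_reflect]
    apply Finset.sum_congr rfl
    intro j hj
    have hjk : j ≤ k := by
      have := Finset.mem_range.mp hj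
      omega
    have hidx : k + 1 - 1 - j = k - j := by omega
    rw [hidx]
    show segCost (fun t => y (s+1-t)) (1/γ) (s - τ (k+1-(k-j))) (s - τ (k+1-(k-j+1)))
        (a (k-(k-j)) * γ ^ ((τ (k-(k-j)) : ℤ) + 1 - (τ (k-(k-j)+1) : ℤ)))
      = segCost y γ (τ j) (τ (j+1)) (a j)
    have e1 : k + 1 - (k - j) = j + 1 := by omega
    have e2 : k + 1 - (k - j + 1) = j := by omega
    have e3 : k - (k - j) = j := by omega
    rw [e1, e2, e3]
    have hb' : s - τ j ≤ s := Nat.sub_le _ _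
    rw [segCost_rev y hγ s _ _ hb']
    have hτ1 : τ j ≤ s := hle j (by omega)
    have hτ2 : τ (j+1) ≤ s := hle (j+1) (by omega)
    have f1 : s - (s - τ j) = τ j := by omega
    have f2 : s - (s - τ (j+1)) = τ (j+1) := by omega
    rw [f1, f2]
    congr 1
    have c1 : ((s - τ j : ℕ) : ℤ) = (s:ℤ) - (τ j : ℤ) := by omega
    have c2 : ((s - τ (j+1) : ℕ) : ℤ) = (s:ℤ) - (τ (j+1) : ℤ) := by omega
    rw [c1, c2, mul_assoc, ← zpow_add₀ (ne_of_gt hγ)]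
    have hzero : (τ j : ℤ) + 1 - (τ (j+1) : ℤ)
        + ((s:ℤ) - (τ j : ℤ) - ((s:ℤ) - (τ (j+1) : ℤ)) - 1) = 0 := by ring
    rw [hzero, zpow_zero, mul_one]

end Rev
lemma rev_mem (y : ℕ → ℝ) {γ : ℝ} (hγ : 0 < γ) (lam : ℝ) (s : ℕ) :
    ∀ c ∈ Fset y γ lam s, c ∈ Fset (fun t => y (s+1-t)) (1/γ) lam s := by
  rintro c ⟨k, τ, a, hseg, ha, rfl⟩
  obtain ⟨τ', a', hseg', ha', heq⟩ := objAmp_rev y hγ lam s k τ a hseg ha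
  exact ⟨k, τ', a', hseg', ha', heq.symm⟩

lemma Fval_rev (y : ℕ → ℝ) {γ lam : ℝ} (hγ : 0 < γ) (hlam : 0 ≤ lam) (m : ℕ) :
    Fval y γ lam (m+1) = Fval (fun t => y (m+1+1-t)) (1/γ) lam (m+1) := by
  rw [Fval_succ, Fval_succ]
  have hγ' : 0 < 1/γ := by positivity
  have hbdd1 : BddBelow (Fset y γ lam (m+1)) :=
    bddBelow_of_nonneg (Fset_nonneg y γ hlam (m+1))
  have hbdd2 : BddBelow (Fset (fun t => y (m+1+1-t)) (1/γ) lam (m+1)) :=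
    bddBelow_of_nonneg (Fset_nonneg _ _ hlam (m+1))
  apply le_antisymm
  · apply le_csInf (Fset_nonempty _ _ lam m)
    intro c hc
    -- c ∈ Fset yrev (1/γ); produce element of Fset y γ equal to c
    obtain ⟨k, τ, a, hseg, ha, rfl⟩ := hc
    obtain ⟨τ', a', hseg', ha', heq⟩ :=
      objAmp_rev (fun t => y (m+1+1-t)) hγ' lam (m+1) k τ a hseg ha
    have hagree : ∀ t, 1 ≤ t → t ≤ m+1 →
        (fun t => (fun t => y (m+1+1-t)) (m+1+1-t)) t = y t := by
      intro t h1 h2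
      simp only []
      congr 1
      omega
    have hγγ : 1/(1/γ) = γ := one_div_one_div γ
    have heq2 : objAmp (fun t => (fun t => y (m+1+1-t)) (m+1+1-t)) (1/(1/γ)) lam k τ' a'
        = objAmp y γ lam k τ' a' := by
      rw [hγγ]
      exact objAmp_congr γ lam a' hseg' hagree
    rw [heq2] at heq
    apply csInf_le hbdd1
    exact ⟨k, τ', a', hseg', ha', heq.symm⟩
  · apply le_csInf (Fset_nonempty _ _ lam m)
    intro c hc
    exact csInf_le hbdd2 (rev_mem y hγ lam (m+1) c hc)

/-- For `s ≥ 1`, `γ > 0`, `λ ≥ 0`,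
`min_{α ≥ 0} Cost(y_{1:s}, α; γ) = min_{α ≥ 0} Cost(y_{s:1}, α; 1/γ)`, where
`y_{s:1} = (y_s, …, y_1)` is the time-reversed data (entry `t` is `y (s + 1 - t)`). -/
theorem min_cost_time_reversal (s : ℕ) (hs : 1 ≤ s) (y : ℕ → ℝ)
    (γ lam : ℝ) (hγ : 0 < γ) (hlam : 0 ≤ lam) :
    sInf { c | ∃ α : ℝ, 0 ≤ α ∧ c = Cost y γ lam s α } =
      sInf { c | ∃ α : ℝ, 0 ≤ α ∧ c = Cost (fun t => y (s + 1 - t)) (1/γ) lam s α } := by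
  obtain ⟨m, rfl⟩ : ∃ m, s = m + 1 := ⟨s - 1, by omega⟩
  rw [step1 y γ hlam m, step1 (fun t => y (m + 1 + 1 - t)) (1/γ) hlam m]
  exact Fval_rev y hγ hlam m
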